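/- Suppose a graph G on vertex set V contains a k-clique W, and take G₂ to be the complete graph on V. With singleton blocks and the k vertices of W chosen as shared blocks (mapped to any k distinct vertices of G₂), the SSBM-fixed objective (sum of blockwise log-likelihoods with per-graph MLE parameters on non-shared pairs and pooled MLE parameters on shared pairs) equals 0, and 0 is the maximum possible value of the objective. -/

import Mathlib

/-!
An edge pair fits its MLE exactly, so it contributes `log 1 = 0` whether or not it is shared. A
non-edge pair contributes `0` too unless it is shared: then it is an edge in the complete graph `G₂`,
the pooled estimate is `1/2`, and the pair costs `2 log (1/2) < 0`. Hence every term is `≤ 0`, and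
all terms vanish exactly when every shared pair is an edge of `G`, which is the case for a clique.
-/

/-- Log-likelihood contribution of an ordered pair of distinct singleton blocks in
the k-clique reduction (see the paper's NP-hardness proof). -/
noncomputable def cliquePairTerm (c : ℝ) (shared : Bool) : ℝ :=
  (c * Real.log (if shared then (c + 1) / 2 else c) +
    (1 - c) * Real.log (1 - (if shared then (c + 1) / 2 else c))) +
  (1 * Real.log (if shared then (c + 1) / 2 else 1) +
    0 * Real.log (1 - (if shared then (c + 1) / 2 else 1)))

open Finset in
/-- The SSBM-fixed objective of the k-clique reduction with singleton blocks and
shared vertex set `W`. -/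
noncomputable def cliqueReductionObj {V : Type*} [Fintype V] [DecidableEq V]
    (G : SimpleGraph V) [DecidableRel G.Adj] (W : Finset V) : ℝ :=
  ∑ p ∈ (Finset.univ : Finset V).offDiag,
    cliquePairTerm (if G.Adj p.1 p.2 then (1 : ℝ) else 0)
      (decide (p.1 ∈ W ∧ p.2 ∈ W))

open Real

lemma cliquePairTerm_one (s : Bool) : cliquePairTerm 1 s = 0 := by
  cases s <;> simp [cliquePairTerm]

lemma cliquePairTerm_zero_false : cliquePairTerm 0 false = 0 := by
  simp [cliquePairTerm]

lemma cliquePairTerm_zero_true : cliquePairTerm 0 true = -2 * log 2 := by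
  norm_num [cliquePairTerm]
  rw [one_div, log_inv]
  ring

lemma cliquePairTerm_ite_nonpos (P : Prop) [Decidable P] (s : Bool) :
    cliquePairTerm (if P then 1 else 0) s ≤ 0 := by
  by_cases hP : P
  · simp [hP, cliquePairTerm_one]
  · cases s
    · simp [hP, cliquePairTerm_zero_false]
    · simp only [hP, if_false, cliquePairTerm_zero_true]
      linarith [log_pos one_lt_two]

lemma cliquePairTerm_ite_eq_zero (P : Prop) [Decidable P] (s : Bool) (h : s = true → P) :
    cliquePairTerm (if P then 1 else 0) s = 0 := by
  by_cases hP : P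
  · simp [hP, cliquePairTerm_one]
  · obtain rfl : s = false := by simpa using mt h hP
    simp [hP, cliquePairTerm_zero_false]

/-- If `G` contains a `k`-clique `W`, then sharing the singleton blocks of `W`
achieves SSBM-fixed objective `0`, and `0` is the maximum possible value of the
objective. -/
theorem clique_gives_zero_objective {V : Type*} [Fintype V] [DecidableEq V]
    (G : SimpleGraph V) [DecidableRel G.Adj] (k : ℕ) (W : Finset V)
    (hW : G.IsNClique k W) :
    cliqueReductionObj G W = 0 ∧
    ∀ W' : Finset V, cliqueReductionObj G W' ≤ 0 := by
  refine ⟨Finset.sum_eq_zero fun p hp => ?_,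
    fun W' => Finset.sum_nonpos fun p _ => cliquePairTerm_ite_nonpos _ _⟩
  apply cliquePairTerm_ite_eq_zero
  intro hshared
  obtain ⟨h₁, h₂⟩ := of_decide_eq_true hshared
  exact hW.isClique h₁ h₂ (Finset.mem_offDiag.mp hp).2.2
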